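/- arXiv:2601.07725 — 6 statements merged into one kernel-verified Lean document; each statement's English description precedes it below -/
import Mathlib

section
/- The lattice Δ_s(n) of weak s-compositions of n under dominance order is distributive. -/
def psum {s : ℕ} (a : Fin s → ℕ) (j : Fin s) : ℕ :=
  ∑ i : Fin s, if i ≤ j then a i else 0

/-- Recover a composition from its partial-sum sequence. -/
def unps {s : ℕ} (f : Fin s → ℕ) (j : Fin s) : ℕ :=
  f j - (if j.val = 0 then 0 else f ⟨j.val - 1, lt_of_le_of_lt (Nat.sub_le _ _) j.isLt⟩)

/-- Join in Δ_s(n): componentwise max of partial sums. -/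
def cjoin {s : ℕ} (a b : Fin s → ℕ) : Fin s → ℕ :=
  unps (fun j => max (psum a j) (psum b j))

/-- Meet in Δ_s(n): componentwise min of partial sums. -/
def cmeet {s : ℕ} (a b : Fin s → ℕ) : Fin s → ℕ :=
  unps (fun j => min (psum a j) (psum b j))

lemma psum_mono {s : ℕ} (a : Fin s → ℕ) : Monotone (psum a) := by
  intro i j hij
  apply Finset.sum_le_sum
  intro k _
  by_cases h : k ≤ i
  · simp [h, le_trans h hij]
  · simp [h]

/-- Extend `a` to ℕ by zero. -/
def aext {s : ℕ} (a : Fin s → ℕ) (i : ℕ) : ℕ :=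
  if h : i < s then a ⟨i, h⟩ else 0

lemma psum_eq_range {s : ℕ} (a : Fin s → ℕ) (j : Fin s) :
    psum a j = ∑ i ∈ Finset.range (j.val + 1), aext a i := by
  unfold psum
  have h1 : ∀ i : Fin s, (if i ≤ j then a i else 0)
      = (fun i : ℕ => if i ≤ j.val then aext a i else 0) i.val := by
    intro i
    simp only [Fin.le_def, aext, i.isLt, dif_pos]
  rw [Finset.sum_congr rfl (fun i _ => h1 i),
    Fin.sum_univ_eq_sum_range (fun i : ℕ => if i ≤ j.val then aext a i else 0) s]
  symm
  apply Finset.sum_subset_zero_on_sdiff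
  · intro i hi
    simp only [Finset.mem_range] at hi ⊢
    omega
  · intro i hi
    simp only [Finset.mem_sdiff, Finset.mem_range] at hi
    rw [if_neg (by omega)]
  · intro i hi
    simp only [Finset.mem_range] at hi
    rw [if_pos (by omega)]

lemma psum_unps_aux {s : ℕ} (f : Fin s → ℕ) (hf : Monotone f) :
    ∀ m : ℕ, ∀ h : m < s, psum (unps f) ⟨m, h⟩ = f ⟨m, h⟩ := by
  intro m
  induction m with
  | zero =>
    intro h
    rw [psum_eq_range]
    simp [aext, unps, h]
  | succ k ih =>
    intro h
    have hk : k < s := by omega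
    have ih' := ih hk
    rw [psum_eq_range] at ih' ⊢
    rw [Finset.sum_range_succ]
    have : (⟨k + 1, h⟩ : Fin s).val = k + 1 := rfl
    simp only [this]
    rw [ih']
    have hext : aext (unps f) (k + 1) = unps f ⟨k + 1, h⟩ := by simp [aext, h]
    rw [hext]
    have hunps : unps f ⟨k + 1, h⟩ = f ⟨k + 1, h⟩ - f ⟨k, hk⟩ := by
      simp [unps]
    rw [hunps]
    have : f ⟨k, hk⟩ ≤ f ⟨k + 1, h⟩ := hf (by rw [Fin.le_def]; simp)
    omega

lemma psum_unps {s : ℕ} (f : Fin s → ℕ) (hf : Monotone f) : psum (unps f) = f := by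
  funext j
  have := psum_unps_aux f hf j.val j.isLt
  simpa using this

lemma psum_cjoin {s : ℕ} (a b : Fin s → ℕ) :
    psum (cjoin a b) = fun j => max (psum a j) (psum b j) :=
  psum_unps _ (fun i j h => max_le_max (psum_mono a h) (psum_mono b h))

lemma psum_cmeet {s : ℕ} (a b : Fin s → ℕ) :
    psum (cmeet a b) = fun j => min (psum a j) (psum b j) :=
  psum_unps _ (fun i j h => min_le_min (psum_mono a h) (psum_mono b h))

/-- the lattice Δ_s(n) is distributive. -/
theorem weakComposition_distributive (s n : ℕ) (a b c : Fin s → ℕ)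
    (ha : ∑ i, a i = n) (hb : ∑ i, b i = n) (hc : ∑ i, c i = n) :
    cjoin a (cmeet b c) = cmeet (cjoin a b) (cjoin a c) ∧
    cmeet a (cjoin b c) = cjoin (cmeet a b) (cmeet a c) := by
  constructor
  · show unps _ = unps _
    rw [psum_cmeet, psum_cjoin, psum_cjoin]
    apply congrArg unps
    funext j
    exact max_min_distrib_left (psum a j) (psum b j) (psum c j)
  · show unps _ = unps _
    rw [psum_cjoin, psum_cmeet, psum_cmeet]
    apply congrArg unps
    funext j
    exact min_max_distrib_left (psum a j) (psum b j) (psum c j)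
end

section
/- For a ∈ Δ_s(n), the number of elements of Δ_s(n) that cover a in the dominance order equals the number of nonzero entries among a_1, ..., a_{s-1} (i.e., the Hamming weight of (a_1,...,a_{s-1})). -/
def Dom {s : ℕ} (a b : Fin s → ℕ) : Prop := ∀ j : Fin s, psum a j ≤ psum b j

def SDom {s : ℕ} (a b : Fin s → ℕ) : Prop := Dom a b ∧ a ≠ b

def CoversWC {s : ℕ} (n : ℕ) (a b : Fin s → ℕ) : Prop :=
  SDom a b ∧ ∀ c : Fin s → ℕ, (∑ i, c i = n) → SDom a c → SDom c b → False

/-!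
The covers of `a` are exactly the compositions `move a k`, which shift one unit from a nonzero
part `k ≥ 1` to part `k - 1`. On partial sums, `move a k` only raises the one ending at `k - 1`,
by one; since partial sums determine a composition, nothing lies strictly between `a` and
`move a k`. Conversely, if `b` strictly dominates `a` with the same total and `j` is the last
index where their partial sums differ, then `a (j + 1) > b (j + 1)` and `move a (j + 1)` still
lies below `b`. Distinct `k` give distinct `move a k`.
-/

open Finset

variable {s : ℕ}

lemma psum_eq_sum_Iic (a : Fin s → ℕ) (j : Fin s) : psum a j = ∑ i ∈ Iic j, a i := by
  rw [psum, ← sum_filter]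
  congr 1
  ext i
  simp

lemma psum_add (a b : Fin s → ℕ) (j : Fin s) : psum (a + b) j = psum a j + psum b j := by
  simp only [psum_eq_sum_Iic, Pi.add_apply, sum_add_distrib]

lemma psum_single (k j : Fin s) : psum (Pi.single k 1) j = if k ≤ j then 1 else 0 := by
  simp [psum_eq_sum_Iic, sum_pi_single']

lemma psum_of_val_eq_zero (a : Fin s → ℕ) {j : Fin s} (hj : j.val = 0) : psum a j = a j := by
  have : Iic j = {j} := by
    ext i
    simp only [mem_Iic, mem_singleton, Fin.le_def, Fin.ext_iff]
    omega
  rw [psum_eq_sum_Iic, this, sum_singleton]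

lemma psum_of_val_add_one_eq (a : Fin s → ℕ) {j : Fin s} (hj : j.val + 1 = s) :
    psum a j = ∑ i, a i := by
  have : Iic j = univ := by
    ext i
    simp only [mem_Iic, Fin.le_def, mem_univ, iff_true]
    omega
  rw [psum_eq_sum_Iic, this]

/-- The index `k - 1`, truncated at `0`. -/
def predIdx (k : Fin s) : Fin s := ⟨k.val - 1, lt_of_le_of_lt (Nat.sub_le _ _) k.isLt⟩

lemma psum_eq_psum_predIdx_add (a : Fin s → ℕ) {j : Fin s} (hj : j.val ≠ 0) :
    psum a j = psum a (predIdx j) + a j := by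
  have : Iic j = (Iic (predIdx j)).cons j (by simp [Fin.le_def, predIdx]; omega) := by
    ext i
    simp only [mem_Iic, mem_cons, Fin.le_def, Fin.ext_iff, predIdx]
    omega
  rw [psum_eq_sum_Iic, psum_eq_sum_Iic, this, sum_cons, add_comm]

lemma psum_injective : Function.Injective (psum : (Fin s → ℕ) → Fin s → ℕ) := by
  intro a b h
  funext j
  by_cases hj : j.val = 0
  · rw [← psum_of_val_eq_zero a hj, ← psum_of_val_eq_zero b hj, h]
  · have hja := psum_eq_psum_predIdx_add a hj
    have hjb := psum_eq_psum_predIdx_add b hj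
    rw [h] at hja
    omega

/-- The paper's `a + e^{(k-1)} - e^{(k)}`; a genuine move only when `k ≠ 0` and `a k ≠ 0`. -/
def move (a : Fin s → ℕ) (k : Fin s) : Fin s → ℕ :=
  a - Pi.single k 1 + Pi.single (predIdx k) 1

section Move

variable {a : Fin s → ℕ} {k : Fin s}

lemma move_add_single (hak : a k ≠ 0) :
    move a k + Pi.single k 1 = a + Pi.single (predIdx k) 1 := by
  ext i
  simp only [move, Pi.add_apply, Pi.sub_apply, Pi.single_apply]
  split_ifs with h <;> subst_vars <;> omega

lemma sum_move (hak : a k ≠ 0) : ∑ i, move a k i = ∑ i, a i := by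
  have := congrArg (fun f => ∑ i, f i) (move_add_single hak)
  simpa [sum_add_distrib] using this

lemma psum_move (hk : k.val ≠ 0) (hak : a k ≠ 0) (j : Fin s) :
    psum (move a k) j = psum a j + if j = predIdx k then 1 else 0 := by
  have h := congrArg (psum · j) (move_add_single hak)
  simp only [psum_add, psum_single] at h
  simp only [Fin.le_def, Fin.ext_iff, predIdx] at h ⊢
  split_ifs at h ⊢ <;> omega

lemma sdom_move (hk : k.val ≠ 0) (hak : a k ≠ 0) : SDom a (move a k) := by
  refine ⟨fun j => by rw [psum_move hk hak]; omega, fun h => ?_⟩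
  have := psum_move hk hak (predIdx k)
  rw [← h, if_pos rfl] at this
  omega

lemma eq_or_eq_move_of_dom (hk : k.val ≠ 0) (hak : a k ≠ 0) {c : Fin s → ℕ}
    (hac : Dom a c) (hcm : Dom c (move a k)) : c = a ∨ c = move a k := by
  have hbetween (j : Fin s) : psum a j ≤ psum c j ∧
      psum c j ≤ psum a j + if j = predIdx k then 1 else 0 :=
    ⟨hac j, psum_move hk hak j ▸ hcm j⟩
  by_cases hp : psum c (predIdx k) = psum a (predIdx k)
  · refine .inl (psum_injective (funext fun j => ?_))
    have := hbetween j
    by_cases hj : j = predIdx k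
    · subst hj; exact hp
    · simp only [if_neg hj] at this; omega
  · refine .inr (psum_injective (funext fun j => ?_))
    have := hbetween j
    rw [psum_move hk hak]
    by_cases hj : j = predIdx k
    · subst hj; simp only [if_true] at this ⊢; omega
    · simp only [if_neg hj] at this ⊢; omega

lemma covers_move (n : ℕ) (hk : k.val ≠ 0) (hak : a k ≠ 0) : CoversWC n a (move a k) := by
  refine ⟨sdom_move hk hak, fun c _ ⟨hac, hne⟩ ⟨hcm, hne'⟩ => ?_⟩
  rcases eq_or_eq_move_of_dom hk hak hac hcm with rfl | rfl
  exacts [hne rfl, hne' rfl]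

lemma eq_of_move_eq {k' : Fin s} (hk : k.val ≠ 0) (hak : a k ≠ 0) (hk' : k'.val ≠ 0)
    (hak' : a k' ≠ 0) (h : move a k = move a k') : k = k' := by
  have h₁ := psum_move hk hak (predIdx k)
  have h₂ := psum_move hk' hak' (predIdx k)
  rw [if_pos rfl, h] at h₁
  by_cases hp : predIdx k = predIdx k'
  · simp only [predIdx, Fin.ext_iff] at hp ⊢
    omega
  · rw [if_neg hp] at h₂
    omega

end Move

lemma exists_move_dom {a b : Fin s → ℕ} (hsum : ∑ i, a i = ∑ i, b i) (hd : Dom a b)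
    (hne : a ≠ b) : ∃ k : Fin s, k.val ≠ 0 ∧ a k ≠ 0 ∧ Dom (move a k) b := by
  have hlt : (univ.filter fun j => psum a j < psum b j).Nonempty := by
    by_contra h
    exact hne (psum_injective (funext fun j =>
      (hd j).antisymm (not_lt.mp fun hj => h ⟨j, by simpa using hj⟩)))
  set j := (univ.filter fun j => psum a j < psum b j).max' hlt
  have hj : psum a j < psum b j := (mem_filter.mp (max'_mem _ hlt)).2
  have hjs : j.val + 1 < s := by
    by_contra h
    rw [psum_of_val_add_one_eq a (by omega), psum_of_val_add_one_eq b (by omega)] at hj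
    omega
  set k : Fin s := ⟨j.val + 1, hjs⟩
  have hk : k.val ≠ 0 := Nat.succ_ne_zero _
  have hpred : predIdx k = j := Fin.ext (by simp [predIdx, k])
  have hkeq : psum a k = psum b k := by
    refine (hd k).antisymm (not_lt.mp fun h => ?_)
    have : k ≤ j := le_max' _ k (mem_filter.mpr ⟨mem_univ _, h⟩)
    simp [Fin.le_def, k] at this
  have hak : a k ≠ 0 := by
    have ha := psum_eq_psum_predIdx_add a hk
    have hb := psum_eq_psum_predIdx_add b hk
    rw [hpred] at ha hb
    omega
  refine ⟨k, hk, hak, fun i => ?_⟩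
  rw [psum_move hk hak, hpred]
  split_ifs with hi
  · subst hi; omega
  · simpa using hd i

lemma covers_iff_exists_move {n : ℕ} {a b : Fin s → ℕ} (ha : ∑ i, a i = n) :
    (∑ i, b i = n ∧ CoversWC n a b) ↔ ∃ k : Fin s, (k.val ≠ 0 ∧ a k ≠ 0) ∧ move a k = b := by
  constructor
  · rintro ⟨hb, ⟨hd, hne⟩, hmin⟩
    obtain ⟨k, hk, hak, hkb⟩ := exists_move_dom (ha.trans hb.symm) hd hne
    refine ⟨k, ⟨hk, hak⟩, by_contra fun h => ?_⟩
    exact hmin (move a k) ((sum_move hak).trans ha) (sdom_move hk hak) ⟨hkb, h⟩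
  · rintro ⟨k, ⟨hk, hak⟩, rfl⟩
    exact ⟨(sum_move hak).trans ha, covers_move n hk hak⟩

/-- the number of elements of Δ_s(n) covering `a` equals the
Hamming weight of (a_1,…,a_{s-1}). -/
theorem card_covers (s n : ℕ) (a : Fin s → ℕ) (ha : ∑ i, a i = n) :
    Set.ncard {b : Fin s → ℕ | (∑ i, b i = n) ∧ CoversWC n a b} =
      (Finset.univ.filter (fun i : Fin s => i.val ≠ 0 ∧ a i ≠ 0)).card := by
  have hset : {b : Fin s → ℕ | (∑ i, b i = n) ∧ CoversWC n a b} =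
      ↑((univ.filter fun i : Fin s => i.val ≠ 0 ∧ a i ≠ 0).image (move a)) := by
    ext b
    simpa using covers_iff_exists_move ha
  rw [hset, Set.ncard_coe_finset]
  refine card_image_of_injOn fun k hk k' hk' h => ?_
  simp only [coe_filter, mem_univ, true_and, Set.mem_ofPred_eq] at hk hk'
  exact eq_of_move_eq hk.1 hk.2 hk'.1 hk'.2 h
end

section
/- For a ∈ Δ_s(n), the set B(a) = { a + Σ_{j∈S} (e^{(j-1)} - e^{(j)}) : S ⊆ supp(a_1,...,a_{s-1}) }, ordered by dominance, is isomorphic as a poset to the power set of supp(a_1,...,a_{s-1}) ordered by inclusion; in particular it is a Boolean lattice. -/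
/-- Hamming support of (a_1,...,a_{s-1}) (indices ≥ 1 with nonzero entry). -/
def suppTail {s : ℕ} (a : Fin s → ℕ) : Finset (Fin s) :=
  Finset.univ.filter (fun i => i.val ≠ 0 ∧ a i ≠ 0)

/-- The element `a + ∑_{j ∈ S} (e^{(j-1)} - e^{(j)})`. -/
def shiftBy {s : ℕ} (a : Fin s → ℕ) (S : Finset (Fin s)) : Fin s → ℕ :=
  fun i =>
    a i +
      (if h : i.val + 1 < s then (if (⟨i.val + 1, h⟩ : Fin s) ∈ S then 1 else 0) else 0) -
      (if i ∈ S then 1 else 0)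

/-!
Let `χ_S : ℕ → ℕ` be the indicator of the positions in `S`. Then
`shiftBy a S i = a i + χ_S (i + 1) - χ_S i`, and for `S ⊆ suppTail a` the truncated subtraction
is exact because `χ_S ≤ a` and `χ_S 0 = 0`. So the partial sums telescope:
`psum (shiftBy a S) j = psum a j + χ_S (j + 1)`. Hence the total sum is unchanged, and
`shiftBy a S` is dominated by `shiftBy a T` iff `χ_S ≤ χ_T` at all positive indices,
i.e. (as `0 ∉ S`) iff `S ⊆ T`.
-/

open Finset

theorem Finset.sum_range_add_sub_telescope {f c : ℕ → ℕ} {m : ℕ}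
    (hc : ∀ k < m, c k ≤ f k) :
    ∑ k ∈ range m, (f k + c (k + 1) - c k) + c 0 = ∑ k ∈ range m, f k + c m := by
  induction m with
  | zero => simp
  | succ m ih =>
    have hm := hc m m.lt_succ_self
    have := ih fun k hk => hc k (Nat.lt_succ_of_lt hk)
    rw [sum_range_succ, sum_range_succ]
    omega

def zeroExtend {M : Type*} [Zero M] {s : ℕ} (f : Fin s → M) (k : ℕ) : M :=
  if h : k < s then f ⟨k, h⟩ else 0

@[simp]
lemma zeroExtend_val {M : Type*} [Zero M] {s : ℕ} (f : Fin s → M) (i : Fin s) :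
    zeroExtend f i = f i := by
  simp [zeroExtend]

lemma zeroExtend_of_le {M : Type*} [Zero M] {s : ℕ} (f : Fin s → M) {k : ℕ} (hk : s ≤ k) :
    zeroExtend f k = 0 := by
  simp [zeroExtend, Nat.not_lt.mpr hk]

lemma sum_eq_sum_range_zeroExtend {M : Type*} [AddCommMonoid M] {s : ℕ} (f : Fin s → M) :
    ∑ i, f i = ∑ k ∈ range s, zeroExtend f k := by
  simp_rw [← Fin.sum_univ_eq_sum_range, zeroExtend_val]

lemma psum_eq_sum_range_zeroExtend {s : ℕ} (f : Fin s → ℕ) (j : Fin s) :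
    psum f j = ∑ k ∈ range ((j : ℕ) + 1), zeroExtend f k := by
  have hterm : ∀ i : Fin s, (if i ≤ j then f i else 0) =
      if (i : ℕ) ∈ range ((j : ℕ) + 1) then zeroExtend f i else 0 := by
    intro i
    simp only [mem_range, Nat.lt_succ_iff, Fin.le_def, zeroExtend_val]
  rw [psum, Finset.sum_congr rfl fun i _ => hterm i,
    Fin.sum_univ_eq_sum_range (fun k => if k ∈ range ((j : ℕ) + 1) then zeroExtend f k else 0),
    ← sum_filter, filter_mem_eq_inter, inter_eq_right.mpr (range_subset_range.mpr j.isLt)]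

def natIndicator {s : ℕ} (S : Finset (Fin s)) : ℕ → ℕ :=
  zeroExtend fun i => if i ∈ S then 1 else 0

lemma natIndicator_val {s : ℕ} (S : Finset (Fin s)) (i : Fin s) :
    natIndicator S i = if i ∈ S then 1 else 0 :=
  zeroExtend_val _ i

section shiftBy

variable {s : ℕ} {a : Fin s → ℕ} {S T : Finset (Fin s)}

lemma zeroExtend_shiftBy (k : ℕ) :
    zeroExtend (shiftBy a S) k = zeroExtend a k + natIndicator S (k + 1) - natIndicator S k := by
  by_cases hk : k < s
  · simp [zeroExtend, natIndicator, hk, shiftBy]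
  · have hsk : s ≤ k := Nat.not_lt.mp hk
    simp [natIndicator, zeroExtend_of_le _ hsk, zeroExtend_of_le _ (Nat.le_succ_of_le hsk)]

lemma mem_suppTail {i : Fin s} : i ∈ suppTail a ↔ (i : ℕ) ≠ 0 ∧ a i ≠ 0 := by
  simp [suppTail]

lemma natIndicator_le_zeroExtend (hS : S ⊆ suppTail a) (k : ℕ) :
    natIndicator S k ≤ zeroExtend a k := by
  by_cases hk : k < s
  · obtain ⟨i, rfl⟩ : ∃ i : Fin s, (i : ℕ) = k := ⟨⟨k, hk⟩, rfl⟩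
    rw [natIndicator_val, zeroExtend_val]
    split_ifs with hi
    · exact Nat.one_le_iff_ne_zero.mpr (mem_suppTail.mp (hS hi)).2
    · exact Nat.zero_le _
  · simp [natIndicator, zeroExtend_of_le _ (Nat.not_lt.mp hk)]

lemma natIndicator_zero (hS : S ⊆ suppTail a) : natIndicator S 0 = 0 := by
  by_cases hs : 0 < s
  · have h0 : (⟨0, hs⟩ : Fin s) ∉ S := fun h => (mem_suppTail.mp (hS h)).1 rfl
    simpa [h0] using natIndicator_val S ⟨0, hs⟩
  · exact zeroExtend_of_le _ (Nat.not_lt.mp hs)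

lemma natIndicator_le_natIndicator (hST : S ⊆ T) (k : ℕ) :
    natIndicator S k ≤ natIndicator T k := by
  by_cases hk : k < s
  · obtain ⟨i, rfl⟩ : ∃ i : Fin s, (i : ℕ) = k := ⟨⟨k, hk⟩, rfl⟩
    rw [natIndicator_val, natIndicator_val]
    by_cases hiS : i ∈ S
    · simp [hiS, hST hiS]
    · simp [hiS]
  · simp [natIndicator, zeroExtend_of_le _ (Nat.not_lt.mp hk)]

lemma sum_range_zeroExtend_shiftBy (hS : S ⊆ suppTail a) (m : ℕ) :
    ∑ k ∈ range m, zeroExtend (shiftBy a S) k =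
      ∑ k ∈ range m, zeroExtend a k + natIndicator S m := by
  simpa only [zeroExtend_shiftBy, natIndicator_zero hS, add_zero] using
    sum_range_add_sub_telescope fun k _ => natIndicator_le_zeroExtend hS k

lemma psum_shiftBy (hS : S ⊆ suppTail a) (j : Fin s) :
    psum (shiftBy a S) j = psum a j + natIndicator S ((j : ℕ) + 1) := by
  simp only [psum_eq_sum_range_zeroExtend, sum_range_zeroExtend_shiftBy hS]

lemma sum_shiftBy (hS : S ⊆ suppTail a) : ∑ i, shiftBy a S i = ∑ i, a i := by
  simp only [sum_eq_sum_range_zeroExtend, sum_range_zeroExtend_shiftBy hS, natIndicator,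
    zeroExtend_of_le _ le_rfl, add_zero]

lemma dom_shiftBy_iff_subset (hS : S ⊆ suppTail a) (hT : T ⊆ suppTail a) :
    Dom (shiftBy a S) (shiftBy a T) ↔ S ⊆ T := by
  simp only [Dom, psum_shiftBy hS, psum_shiftBy hT, add_le_add_iff_left]
  refine ⟨fun h i hiS => ?_, fun hST j => natIndicator_le_natIndicator hST _⟩
  have hi0 := (mem_suppTail.mp (hS hiS)).1
  have hi := h ⟨i - 1, by omega⟩
  rw [show (i : ℕ) - 1 + 1 = i by omega, natIndicator_val, natIndicator_val, if_pos hiS] at hi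
  by_contra hiT
  simp [hiT] at hi

end shiftBy

/-- B(a) ordered by dominance is isomorphic to the power set of
supp(a_1,…,a_{s-1}) ordered by inclusion (hence a Boolean lattice). -/
theorem boolean_sublattice (s n : ℕ) (a : Fin s → ℕ) (ha : ∑ i, a i = n) :
    (∀ S : Finset (Fin s), S ⊆ suppTail a → ∑ i, shiftBy a S i = n) ∧
    (∀ S T : Finset (Fin s), S ⊆ suppTail a → T ⊆ suppTail a →
      (Dom (shiftBy a S) (shiftBy a T) ↔ S ⊆ T)) ∧
    (∀ S T : Finset (Fin s), S ⊆ suppTail a → T ⊆ suppTail a →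
      shiftBy a S = shiftBy a T → S = T) := by
  refine ⟨fun S hS => ha ▸ sum_shiftBy hS, fun S T => dom_shiftBy_iff_subset, ?_⟩
  intro S T hS hT hST
  have hdom : Dom (shiftBy a S) (shiftBy a T) := hST ▸ fun _ => le_rfl
  have hdom' : Dom (shiftBy a T) (shiftBy a S) := hST ▸ fun _ => le_rfl
  exact Subset.antisymm ((dom_shiftBy_iff_subset hS hT).mp hdom)
    ((dom_shiftBy_iff_subset hT hS).mp hdom')
end

section
/- The Möbius function of the interval [a,b] in Δ_s(n) equals (-1)^{|S|} when b ∈ B(a) with b - a = Σ_{j∈S}(e^{(j-1)} - e^{(j)}), and equals 0 when b ∉ B(a). -/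
namespace MWC

variable {s : ℕ}

def fpred (j : Fin s) : Fin s := ⟨j.val - 1, Nat.lt_of_le_of_lt (Nat.sub_le _ _) j.isLt⟩

def ind (S : Finset (Fin s)) (j : Fin s) : ℕ :=
  if h : j.val + 1 < s then (if (⟨j.val + 1, h⟩ : Fin s) ∈ S then 1 else 0) else 0

lemma ind_le_one (S : Finset (Fin s)) (j : Fin s) : ind S j ≤ 1 := by
  unfold ind; split <;> [split <;> omega; omega]

lemma ind_mono {S S' : Finset (Fin s)} (h : S ⊆ S') (j : Fin s) : ind S j ≤ ind S' j := by
  unfold ind; split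
  · split
    · rename_i h1 h2; simp [h h2]
    · omega
  · omega

lemma ind_fpred (S : Finset (Fin s)) (j : Fin s) (hj : j.val ≠ 0) :
    ind S (fpred j) = if j ∈ S then 1 else 0 := by
  unfold ind fpred
  have h1 : j.val - 1 + 1 < s := by omega
  rw [dif_pos h1]
  have h2 : (⟨j.val - 1 + 1, h1⟩ : Fin s) = j := Fin.ext (show j.val - 1 + 1 = j.val by omega)
  rw [h2]

lemma ind_last (S : Finset (Fin s)) (j : Fin s) (hj : ¬ j.val + 1 < s) : ind S j = 0 :=
  dif_neg hj

lemma psum_coe_last (x : Fin s → ℕ) (j : Fin s) (hj : j.val = s - 1) :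
    psum x j = ∑ i, x i := by
  unfold psum
  refine Finset.sum_congr rfl fun i _ => ?_
  rw [if_pos]
  have := i.isLt
  exact Fin.le_def.mpr (by omega)

lemma psum_zero (x : Fin s → ℕ) (j : Fin s) (hj : j.val = 0) : psum x j = x j := by
  unfold psum
  rw [Finset.sum_eq_single j]
  · rw [if_pos le_rfl]
  · intro i _ hij
    rw [if_neg]
    intro hle
    exact hij (Fin.ext (by have := Fin.le_def.mp hle; omega))
  · simp

lemma psum_succ (x : Fin s → ℕ) (j : Fin s) (hj : j.val ≠ 0) :
    psum x j = psum x (fpred j) + x j := by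
  unfold psum
  have key : ∀ i : Fin s, (if i ≤ j then x i else 0) =
      (if i ≤ fpred j then x i else 0) + (if i = j then x i else 0) := by
    intro i
    have h3 : (i ≤ j) ↔ (i ≤ fpred j ∨ i = j) := by
      simp only [Fin.le_def, Fin.ext_iff, fpred]
      omega
    by_cases h2 : i = j
    · subst h2
      have h1 : ¬ i ≤ fpred i := by
        simp only [Fin.le_def, fpred]; omega
      simp [h1]
    · by_cases h1 : i ≤ fpred j
      · simp [h3.mpr (Or.inl h1), h1, h2]
      · have h4 : ¬ i ≤ j := fun h => (h3.mp h).elim h1 h2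
        simp [h4, h1, h2]
  rw [Finset.sum_congr rfl fun i _ => key i, Finset.sum_add_distrib]
  congr 1
  rw [Finset.sum_eq_single j]
  · rw [if_pos rfl]
  · intro i _ hij; rw [if_neg hij]
  · simp

lemma psum_inj {x y : Fin s → ℕ} (h : ∀ j, psum x j = psum y j) : x = y := by
  funext j
  rcases Nat.eq_zero_or_pos j.val with hj | hj
  · rw [← psum_zero x j hj, ← psum_zero y j hj, h j]
  · have hx := psum_succ x j (by omega)
    have hy := psum_succ y j (by omega)
    have := h j
    have := h (fpred j)
    omega

lemma mem_suppTail {a : Fin s → ℕ} {j : Fin s} :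
    j ∈ suppTail a ↔ j.val ≠ 0 ∧ a j ≠ 0 := by
  simp [suppTail]

lemma psum_shiftBy {a : Fin s → ℕ} {S : Finset (Fin s)} (hS : S ⊆ suppTail a) :
    ∀ j : Fin s, psum (shiftBy a S) j = psum a j + ind S j := by
  suffices H : ∀ m : ℕ, ∀ j : Fin s, j.val = m → psum (shiftBy a S) j = psum a j + ind S j by
    intro j; exact H j.val j rfl
  intro m
  induction m using Nat.strong_induction_on with
  | _ m IH =>
    intro j hj
    have hshift : shiftBy a S j + (if j ∈ S then 1 else 0) = a j + ind S j := by
      unfold shiftBy ind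
      have : (if j ∈ S then 1 else 0) ≤ a j := by
        split
        · rename_i h; have := (mem_suppTail.mp (hS h)).2; omega
        · omega
      omega
    rcases Nat.eq_zero_or_pos m with hm | hm
    · have hj0 : j.val = 0 := by omega
      have hns : j ∉ S := fun h => (mem_suppTail.mp (hS h)).1 hj0
      rw [psum_zero _ j hj0, psum_zero _ j hj0]
      simpa [hns] using hshift
    · have hj0 : j.val ≠ 0 := by omega
      rw [psum_succ _ j hj0, psum_succ _ j hj0,
        IH (j.val - 1) (by omega) (fpred j) rfl, ind_fpred S j hj0]
      omega

lemma shiftBy_eq_of_psum {a z : Fin s → ℕ} {S : Finset (Fin s)} (hS : S ⊆ suppTail a)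
    (h : ∀ j, psum z j = psum a j + ind S j) : z = shiftBy a S :=
  psum_inj (fun j => by rw [h j, psum_shiftBy hS j])

lemma shiftBy_inj {a : Fin s → ℕ} {S S' : Finset (Fin s)} (hS : S ⊆ suppTail a)
    (hS' : S' ⊆ suppTail a) (h : shiftBy a S = shiftBy a S') : S = S' := by
  have hp : ∀ j, ind S j = ind S' j := by
    intro j
    have := psum_shiftBy hS j
    have := psum_shiftBy hS' j
    rw [h] at *
    omega
  ext j
  constructor
  · intro hj
    have h0 := (mem_suppTail.mp (hS hj)).1
    have := hp (fpred j)
    rw [ind_fpred S j h0, ind_fpred S' j h0, if_pos hj] at this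
    by_contra hn; rw [if_neg hn] at this; omega
  · intro hj
    have h0 := (mem_suppTail.mp (hS' hj)).1
    have := hp (fpred j)
    rw [ind_fpred S j h0, ind_fpred S' j h0, if_pos hj] at this
    by_contra hn; rw [if_neg hn] at this; omega

end MWC

namespace MWC

lemma shiftBy_empty (a : Fin s → ℕ) : shiftBy a (∅ : Finset (Fin s)) = a := by
  funext i; simp [shiftBy]

end MWC

/-- the Möbius function of the interval [a,b] in Δ_s(n) is
`(-1)^{|S|}` when `b = a + ∑_{j∈S}(e^{(j-1)} - e^{(j)})` for a subset `S` of the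
support of `(a_1,…,a_{s-1})`, and `0` otherwise. Here `μ` is any function
satisfying the defining recursion of the Möbius function of Δ_s(n). -/
theorem mobius_weakCompositions (s n : ℕ)
    (μ : (Fin s → ℕ) → (Fin s → ℕ) → ℤ)
    (hrefl : ∀ x : Fin s → ℕ, (∑ i, x i = n) → μ x x = 1)
    (hrec : ∀ x y : Fin s → ℕ, (∑ i, x i = n) → (∑ i, y i = n) → Dom x y → x ≠ y →
      ∀ F : Finset (Fin s → ℕ),
        (∀ z : Fin s → ℕ, z ∈ F ↔ ((∑ i, z i = n) ∧ Dom x z ∧ Dom z y)) →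
        ∑ z ∈ F, μ x z = 0)
    (a b : Fin s → ℕ) (ha : ∑ i, a i = n) (hb : ∑ i, b i = n) (hab : Dom a b) :
    (∀ S : Finset (Fin s), S ⊆ suppTail a → b = shiftBy a S →
        μ a b = (-1) ^ S.card) ∧
    ((¬ ∃ S : Finset (Fin s), S ⊆ suppTail a ∧ b = shiftBy a S) → μ a b = 0) := by
  classical
  rcases Nat.eq_zero_or_pos s with hs | hs
  · subst hs
    have hba : b = a := funext fun i => i.elim0
    subst hba
    constructor
    · intro S hSsub hSeq
      have hS : S = ∅ := Finset.eq_empty_of_isEmpty S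
      rw [hS, Finset.card_empty, pow_zero, hrefl b hb]
    · intro h
      exact absurd ⟨∅, Finset.empty_subset _, (MWC.shiftBy_empty b).symm⟩ h
  · set jlast : Fin s := ⟨s - 1, by omega⟩ with hjlast
    have hsum_last : ∀ x : Fin s → ℕ, ∑ i, x i = psum x jlast := by
      intro x; exact (MWC.psum_coe_last x jlast rfl).symm
    have hind_last : ∀ S : Finset (Fin s), MWC.ind S jlast = 0 := by
      intro S; exact MWC.ind_last S jlast (by simp [hjlast]; omega)
    -- the interval finset
    set Fb : (Fin s → ℕ) → Finset (Fin s → ℕ) := fun y =>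
      (Fintype.piFinset fun _ : Fin s => Finset.range (n+1)).filter
        (fun z => (∑ i, z i = n) ∧ Dom a z ∧ Dom z y) with hFb
    have hmemF : ∀ (y z : Fin s → ℕ), z ∈ Fb y ↔ ((∑ i, z i = n) ∧ Dom a z ∧ Dom z y) := by
      intro y z
      rw [hFb]
      simp only [Finset.mem_filter, Fintype.mem_piFinset, Finset.mem_range]
      constructor
      · tauto
      · intro h
        refine ⟨fun i => ?_, h⟩
        have h2 : z i ≤ ∑ i, z i :=
          Finset.single_le_sum (fun i _ => Nat.zero_le (z i)) (Finset.mem_univ i)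
        omega
    -- membership of shifts in intervals
    have hshift_sum : ∀ S : Finset (Fin s), S ⊆ suppTail a → ∑ i, shiftBy a S i = n := by
      intro S hS
      rw [hsum_last, MWC.psum_shiftBy hS, hind_last, ← hsum_last, ha]
      omega
    have hshift_dom : ∀ S : Finset (Fin s), S ⊆ suppTail a → Dom a (shiftBy a S) := by
      intro S hS j
      rw [MWC.psum_shiftBy hS]; omega
    have key : ∀ N : ℕ, ∀ y : Fin s → ℕ, (∑ j, psum y j) = N → (∑ i, y i = n) → Dom a y →
        ((∀ S : Finset (Fin s), S ⊆ suppTail a → y = shiftBy a S → μ a y = (-1) ^ S.card) ∧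
         ((¬ ∃ S : Finset (Fin s), S ⊆ suppTail a ∧ y = shiftBy a S) → μ a y = 0)) := by
      intro N
      induction N using Nat.strong_induction_on with
      | _ N IH =>
      intro y hN hy hay
      by_cases hya : y = a
      · subst hya
        constructor
        · intro S hSsub hSeq
          have hS : S = ∅ := by
            apply MWC.shiftBy_inj hSsub (Finset.empty_subset _)
            rw [← hSeq, MWC.shiftBy_empty]
          rw [hS, Finset.card_empty, pow_zero, hrefl y hy]
        · intro h
          exact absurd ⟨∅, Finset.empty_subset _, (MWC.shiftBy_empty y).symm⟩ h
      · -- y ≠ a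
        have hane : a ≠ y := fun h => hya h.symm
        have hsum0 : ∑ z ∈ Fb y, μ a z = 0 := hrec a y ha hy hay hane (Fb y) (hmemF y)
        have hMlt : ∀ z : Fin s → ℕ, Dom z y → z ≠ y → (∑ j, psum z j) < N := by
          intro z hzy hne
          rw [← hN]
          have hexj : ∃ j, psum z j ≠ psum y j := by
            by_contra hc; push_neg at hc; exact hne (MWC.psum_inj hc)
          obtain ⟨j0, hj0⟩ := hexj
          exact Finset.sum_lt_sum (fun j _ => hzy j)
            ⟨j0, Finset.mem_univ _, lt_of_le_of_ne (hzy j0) hj0⟩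
        -- shifts inside the interval
        have hshift_mem : ∀ S : Finset (Fin s), S ⊆ suppTail a →
            (∀ j, psum a j + MWC.ind S j ≤ psum y j) → shiftBy a S ∈ Fb y := by
          intro S hS hle
          rw [hmemF]
          exact ⟨hshift_sum S hS, hshift_dom S hS,
            fun j => by rw [MWC.psum_shiftBy hS]; exact hle j⟩
        by_cases hex : ∃ S : Finset (Fin s), S ⊆ suppTail a ∧ y = shiftBy a S
        · obtain ⟨S₀, hS₀sub, hS₀eq⟩ := hex
          have hS₀ne : S₀ ≠ ∅ := by
            intro h; rw [h, MWC.shiftBy_empty] at hS₀eq; exact hya hS₀eq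
          have hpy : ∀ j, psum y j = psum a j + MWC.ind S₀ j := by
            intro j; rw [hS₀eq, MWC.psum_shiftBy hS₀sub]
          -- the interval is exactly the image of the powerset of S₀
          have hFim : Fb y = (S₀.powerset).image (fun S => shiftBy a S) := by
            apply Finset.Subset.antisymm
            · intro z hz
              rw [hmemF] at hz
              obtain ⟨hzsum, hzaz, hzzy⟩ := hz
              set Sz : Finset (Fin s) :=
                S₀.filter (fun j => psum a (MWC.fpred j) < psum z (MWC.fpred j)) with hSz
              have hSzsub : Sz ⊆ S₀ := Finset.filter_subset _ _
              have hSzsupp : Sz ⊆ suppTail a := hSzsub.trans hS₀sub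
              have hpz : ∀ j, psum z j = psum a j + MWC.ind Sz j := by
                intro j
                have h1 : psum a j ≤ psum z j := hzaz j
                have h2 : psum z j ≤ psum a j + MWC.ind S₀ j := by
                  have := hzzy j; rw [hpy j] at this; exact this
                by_cases h : j.val + 1 < s
                · set j' : Fin s := ⟨j.val + 1, h⟩ with hj'
                  have hfp : MWC.fpred j' = j := Fin.ext (show j.val + 1 - 1 = j.val by omega)
                  have hiz : MWC.ind Sz j = if j' ∈ Sz then 1 else 0 := dif_pos h
                  have hi0 : MWC.ind S₀ j = if j' ∈ S₀ then 1 else 0 := dif_pos h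
                  have hmem' : j' ∈ Sz ↔ (j' ∈ S₀ ∧ psum a j < psum z j) := by
                    rw [hSz, Finset.mem_filter, hfp]
                  by_cases hlt : psum a j < psum z j
                  · have hj'S₀ : j' ∈ S₀ := by
                      rw [hi0] at h2
                      by_contra hn; rw [if_neg hn] at h2; omega
                    have : j' ∈ Sz := hmem'.mpr ⟨hj'S₀, hlt⟩
                    rw [hiz, if_pos this]
                    rw [hi0, if_pos hj'S₀] at h2
                    omega
                  · have : j' ∉ Sz := fun hc => hlt (hmem'.mp hc).2
                    rw [hiz, if_neg this]
                    omega
                · have hiz : MWC.ind Sz j = 0 := dif_neg h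
                  have hi0 : MWC.ind S₀ j = 0 := dif_neg h
                  rw [hiz]; rw [hi0] at h2; omega
              have : z = shiftBy a Sz := MWC.shiftBy_eq_of_psum hSzsupp hpz
              exact Finset.mem_image.mpr ⟨Sz, Finset.mem_powerset.mpr hSzsub, this.symm⟩
            · intro z hz
              obtain ⟨S, hS, rfl⟩ := Finset.mem_image.mp hz
              rw [Finset.mem_powerset] at hS
              exact hshift_mem S (hS.trans hS₀sub)
                (fun j => by rw [hpy j]; exact Nat.add_le_add_left (MWC.ind_mono hS j) _)
          have hinj : ∀ S1 ∈ S₀.powerset, ∀ S2 ∈ S₀.powerset,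
              shiftBy a S1 = shiftBy a S2 → S1 = S2 := by
            intro S1 h1 S2 h2 h
            exact MWC.shiftBy_inj ((Finset.mem_powerset.mp h1).trans hS₀sub)
              ((Finset.mem_powerset.mp h2).trans hS₀sub) h
          have heval : ∀ S ∈ S₀.powerset, μ a (shiftBy a S) =
              (if S = S₀ then μ a y - (-1) ^ S₀.card else 0) + (-1) ^ S.card := by
            intro S hSp
            rw [Finset.mem_powerset] at hSp
            by_cases hSS : S = S₀
            · subst hSS
              rw [if_pos rfl, ← hS₀eq]
              ring
            · rw [if_neg hSS, zero_add]
              have hzmem : shiftBy a S ∈ Fb y := by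
                rw [hFim]
                exact Finset.mem_image.mpr ⟨S, Finset.mem_powerset.mpr hSp, rfl⟩
              rw [hmemF] at hzmem
              have hne : shiftBy a S ≠ y := by
                intro h
                exact hSS (MWC.shiftBy_inj (hSp.trans hS₀sub) hS₀sub (h.trans hS₀eq))
              exact (IH _ (hMlt _ hzmem.2.2 hne) (shiftBy a S) rfl hzmem.1 hzmem.2.1).1
                S (hSp.trans hS₀sub) rfl
          have hsum1 : ∑ z ∈ Fb y, μ a z = ∑ S ∈ S₀.powerset, μ a (shiftBy a S) := by
            rw [hFim, Finset.sum_image hinj]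
          rw [hsum1, Finset.sum_congr rfl heval, Finset.sum_add_distrib,
            Finset.sum_ite_eq' S₀.powerset S₀ (fun _ => μ a y - (-1) ^ S₀.card),
            if_pos (Finset.mem_powerset_self S₀),
            Finset.sum_powerset_neg_one_pow_card, if_neg hS₀ne] at hsum0
          have hμ : μ a y = (-1) ^ S₀.card := by linarith [hsum0]
          constructor
          · intro S hSsub hSeq
            have : S = S₀ := MWC.shiftBy_inj hSsub hS₀sub (hSeq.symm.trans hS₀eq)
            rw [this, hμ]
          · intro h; exact absurd ⟨S₀, hS₀sub, hS₀eq⟩ h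
        · -- no S exists : μ a y = 0
          set T : Finset (Fin s) :=
            (suppTail a).filter (fun j => psum a (MWC.fpred j) < psum y (MWC.fpred j)) with hT
          have hTsupp : T ⊆ suppTail a := Finset.filter_subset _ _
          -- T is nonempty
          have hTne : T ≠ ∅ := by
            have hexj : ∃ j, psum a j < psum y j := by
              by_contra hc
              push_neg at hc
              exact hya (MWC.psum_inj (fun j => le_antisymm (hc j) (hay j)))
            set D : Finset (Fin s) := Finset.univ.filter (fun j => psum a j < psum y j) with hD
            have hDne : D.Nonempty := by
              obtain ⟨j0, hj0⟩ := hexj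
              exact ⟨j0, Finset.mem_filter.mpr ⟨Finset.mem_univ _, hj0⟩⟩
            set k : Fin s := D.max' hDne with hk
            have hkD : k ∈ D := D.max'_mem hDne
            have hklt : psum a k < psum y k := (Finset.mem_filter.mp hkD).2
            have hklast : psum a jlast = psum y jlast := by
              rw [← hsum_last, ← hsum_last, ha, hy]
            have hkval : k.val + 1 < s := by
              rcases Nat.lt_or_ge (k.val + 1) s with h | h
              · exact h
              · exfalso
                have : k = jlast := Fin.ext (by simp [hjlast]; omega)
                rw [this, hklast] at hklt; omega
            set j1 : Fin s := ⟨k.val + 1, hkval⟩ with hj1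
            have hfp : MWC.fpred j1 = k := Fin.ext (show k.val + 1 - 1 = k.val by omega)
            have hj1eq : psum a j1 = psum y j1 := by
              rcases lt_or_eq_of_le (hay j1) with h | h
              · exfalso
                have : j1 ∈ D := Finset.mem_filter.mpr ⟨Finset.mem_univ _, h⟩
                have := D.le_max' j1 this
                rw [← hk] at this
                have := Fin.le_def.mp this
                simp [hj1] at this
              · exact h
            have hsa := MWC.psum_succ a j1 (by simp [hj1])
            have hsy := MWC.psum_succ y j1 (by simp [hj1])
            rw [hfp] at hsa hsy
            have haj1 : a j1 ≠ 0 := by omega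
            apply Finset.nonempty_iff_ne_empty.mp
            exact ⟨j1, Finset.mem_filter.mpr ⟨MWC.mem_suppTail.mpr ⟨by simp [hj1], haj1⟩,
              by rw [hfp]; omega⟩⟩
          -- shifts by subsets of T are in the interval
          have hsubmem : ∀ S : Finset (Fin s), S ⊆ T → shiftBy a S ∈ Fb y := by
            intro S hS
            apply hshift_mem S (hS.trans hTsupp)
            intro j
            by_cases h : j.val + 1 < s
            · set j' : Fin s := ⟨j.val + 1, h⟩ with hj'
              have hfp : MWC.fpred j' = j := Fin.ext (show j.val + 1 - 1 = j.val by omega)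
              have hi : MWC.ind S j = if j' ∈ S then 1 else 0 := dif_pos h
              rw [hi]
              by_cases hmem : j' ∈ S
              · rw [if_pos hmem]
                have := (Finset.mem_filter.mp (hS hmem)).2
                rw [hfp] at this
                omega
              · rw [if_neg hmem]; simpa using hay j
            · rw [MWC.ind_last S j h]; simpa using hay j
          have himsub : (T.powerset).image (fun S => shiftBy a S) ⊆ (Fb y).erase y := by
            intro z hz
            obtain ⟨S, hSp, rfl⟩ := Finset.mem_image.mp hz
            rw [Finset.mem_powerset] at hSp
            refine Finset.mem_erase.mpr ⟨?_, hsubmem S hSp⟩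
            intro h
            exact hex ⟨S, hSp.trans hTsupp, h.symm⟩
          -- elements of the interval that are shifts lie in the image
          have himchar : ∀ z ∈ Fb y, ∀ S : Finset (Fin s), S ⊆ suppTail a → z = shiftBy a S →
              z ∈ (T.powerset).image (fun S => shiftBy a S) := by
            intro z hz S hSsub hSeq
            rw [hmemF] at hz
            have hST : S ⊆ T := by
              intro j hj
              have hj0 : j.val ≠ 0 := (MWC.mem_suppTail.mp (hSsub hj)).1
              have h1 : psum z (MWC.fpred j) = psum a (MWC.fpred j) + 1 := by
                rw [hSeq, MWC.psum_shiftBy hSsub, MWC.ind_fpred S j hj0, if_pos hj]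
              have h2 := hz.2.2 (MWC.fpred j)
              exact Finset.mem_filter.mpr ⟨hSsub hj, by omega⟩
            exact Finset.mem_image.mpr ⟨S, Finset.mem_powerset.mpr hST, hSeq.symm⟩
          have hzero : ∀ z ∈ (Fb y).erase y,
              z ∉ (T.powerset).image (fun S => shiftBy a S) → μ a z = 0 := by
            intro z hz hnim
            have hzF := Finset.mem_of_mem_erase hz
            have hzne := Finset.ne_of_mem_erase hz
            rw [hmemF] at hzF
            apply (IH _ (hMlt z hzF.2.2 hzne) z rfl hzF.1 hzF.2.1).2
            rintro ⟨S, hSsub, hSeq⟩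
            exact hnim (himchar z (by rw [hmemF]; exact hzF) S hSsub hSeq)
          have hinj : ∀ S1 ∈ T.powerset, ∀ S2 ∈ T.powerset,
              shiftBy a S1 = shiftBy a S2 → S1 = S2 := by
            intro S1 h1 S2 h2 h
            exact MWC.shiftBy_inj ((Finset.mem_powerset.mp h1).trans hTsupp)
              ((Finset.mem_powerset.mp h2).trans hTsupp) h
          have heval : ∀ S ∈ T.powerset, μ a (shiftBy a S) = (-1) ^ S.card := by
            intro S hSp
            rw [Finset.mem_powerset] at hSp
            have hzmem := hsubmem S hSp
            have hzer : shiftBy a S ∈ (Fb y).erase y :=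
              himsub (Finset.mem_image.mpr ⟨S, Finset.mem_powerset.mpr hSp, rfl⟩)
            have hzne := Finset.ne_of_mem_erase hzer
            rw [hmemF] at hzmem
            exact (IH _ (hMlt _ hzmem.2.2 hzne) (shiftBy a S) rfl hzmem.1 hzmem.2.1).1
              S (hSp.trans hTsupp) rfl
          have hymem : y ∈ Fb y := (hmemF y y).mpr ⟨hy, hay, fun j => le_rfl⟩
          have hsplit : μ a y + ∑ z ∈ (Fb y).erase y, μ a z = 0 := by
            rw [Finset.add_sum_erase _ _ hymem]; exact hsum0
          have herase : ∑ z ∈ (Fb y).erase y, μ a z = 0 := by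
            rw [← Finset.sum_subset himsub hzero, Finset.sum_image hinj,
              Finset.sum_congr rfl heval, Finset.sum_powerset_neg_one_pow_card, if_neg hTne]
          have hμ : μ a y = 0 := by rw [herase] at hsplit; linarith [hsplit]
          constructor
          · intro S hSsub hSeq; exact absurd ⟨S, hSsub, hSeq⟩ hex
          · intro _; exact hμ
    exact key (∑ j, psum b j) b rfl hb hab
end

section
/- Let C ⊆ R^n be a linear code over a finite chain ring R of rank K. If the maximum Hamming weight of C is w, then w ≥ K. -/
/-! A codeword `c` of maximum weight admits no nonzero codeword `x` vanishing on its support,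
since `c + x` would be heavier. So restriction to the `w` coordinates of the support of `c` embeds
`C` into `R^w`. A finite chain ring is a principal ideal ring, and over such a ring a submodule of
`R^w` needs at most `w` generators: the image under each coordinate projection is a principal
ideal, so one generator per coordinate suffices. -/

open Submodule

theorem isBezout_of_ideal_total {R : Type*} [CommRing R]
    (htotal : ∀ I J : Ideal R, I ≤ J ∨ J ≤ I) : IsBezout R := by
  refine IsBezout.iff_span_pair_isPrincipal.mpr fun x y => ?_
  rw [Ideal.span_insert]
  rcases htotal (Ideal.span {x}) (Ideal.span {y}) with h | h
  · rw [sup_eq_right.mpr h]; exact ⟨y, rfl⟩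
  · rw [sup_eq_left.mpr h]; exact ⟨x, rfl⟩

theorem hammingNorm_add_of_disjoint {ι : Type*} [Fintype ι] {β : ι → Type*}
    [∀ i, AddMonoid (β i)] [∀ i, DecidableEq (β i)] {x y : ∀ i, β i}
    (h : ∀ i, x i ≠ 0 → y i = 0) : hammingNorm (x + y) = hammingNorm x + hammingNorm y := by
  classical
  unfold hammingNorm
  rw [← Finset.card_union_of_disjoint]
  · congr 1
    ext i
    by_cases hx : x i = 0 <;> simp [hx, h i]
  · exact Finset.disjoint_filter.mpr fun i _ hx hy => hy (h i hx)

theorem injective_restrict_support_of_hammingNorm_le {ι R : Type*} [Fintype ι] [CommRing R]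
    [DecidableEq R] {C : Submodule R (ι → R)} {c : ι → R}
    (hc : c ∈ C) (hmax : ∀ x ∈ C, hammingNorm x ≤ hammingNorm c) :
    Function.Injective
      ((LinearMap.funLeft R R (Subtype.val : {i // c i ≠ 0} → ι)).comp C.subtype) := by
  refine (injective_iff_map_eq_zero _).mpr fun ⟨x, hxC⟩ hx => ?_
  have hdisj : ∀ i, c i ≠ 0 → x i = 0 := fun i hi => congr_fun hx ⟨i, hi⟩
  have hsum := hammingNorm_add_of_disjoint hdisj ▸ hmax _ (C.add_mem hc hxC)
  exact Subtype.ext (hammingNorm_eq_zero.mp (show hammingNorm x = 0 by omega))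

theorem Submodule.spanRank_le_one_add_spanRank_inf_ker {R M : Type*} [CommRing R]
    [IsPrincipalIdealRing R] [AddCommGroup M] [Module R M] (π : M →ₗ[R] R)
    (P : Submodule R M) :
    P.spanRank ≤ 1 + (P ⊓ LinearMap.ker π).spanRank := by
  obtain ⟨a, ha⟩ := IsPrincipal.principal (P.map π)
  obtain ⟨g, hgP, rfl⟩ : a ∈ P.map π := ha ▸ mem_span_singleton_self a
  have hP : P = span R {g} ⊔ (P ⊓ LinearMap.ker π) := by
    refine le_antisymm (fun x hx => ?_)
      (sup_le ((span_singleton_le_iff_mem g P).mpr hgP) inf_le_left)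
    obtain ⟨r, hr⟩ :=
      mem_span_singleton.mp (ha ▸ mem_map_of_mem hx : π x ∈ span R {π g})
    have hker : x - r • g ∈ P ⊓ LinearMap.ker π :=
      ⟨P.sub_mem hx (P.smul_mem r hgP), by simp [← hr]⟩
    simpa using add_mem_sup (smul_mem _ r (mem_span_singleton_self g)) hker
  calc P.spanRank ≤ (span R {g}).spanRank + (P ⊓ LinearMap.ker π).spanRank := by
        conv_lhs => rw [hP]
        exact spanRank_sup_le_sum_spanRank
    _ ≤ 1 + (P ⊓ LinearMap.ker π).spanRank := by
        gcongr
        simpa using spanRank_span_le_card ({g} : Set M)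

section PrincipalIdealRing

variable {ι R : Type*} [CommRing R] [IsPrincipalIdealRing R]

theorem Submodule.spanRank_le_card_of_forall_notMem (s : Finset ι) (P : Submodule R (ι → R))
    (hP : ∀ x ∈ P, ∀ i ∉ s, x i = 0) : P.spanRank ≤ s.card := by
  classical
  induction s using Finset.induction generalizing P with
  | empty =>
    rw [Finset.card_empty, Nat.cast_zero, nonpos_iff_eq_zero, spanRank_eq_zero_iff_eq_bot,
      eq_bot_iff]
    exact fun x hx => funext fun i => hP x hx i (Finset.notMem_empty i)
  | insert a s ha ih =>
    have hker : (P ⊓ LinearMap.ker (LinearMap.proj a)).spanRank ≤ s.card := by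
      refine ih _ fun x ⟨hxP, hxa⟩ i hi => ?_
      by_cases hia : i = a
      · exact hia ▸ hxa
      · exact hP x hxP i (by simp [hia, hi])
    calc P.spanRank ≤ 1 + (P ⊓ LinearMap.ker (LinearMap.proj a)).spanRank :=
          P.spanRank_le_one_add_spanRank_inf_ker _
      _ ≤ (insert a s).card := by
          rw [Finset.card_insert_of_notMem ha, Nat.cast_succ, add_comm]
          gcongr

theorem Submodule.spanRank_le_card [Fintype ι] (P : Submodule R (ι → R)) :
    P.spanRank ≤ Fintype.card ι :=
  P.spanRank_le_card_of_forall_notMem Finset.univ fun _ _ i hi => absurd (Finset.mem_univ i) hi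

theorem Submodule.spanRank_le_hammingNorm [Fintype ι] [DecidableEq R]
    {C : Submodule R (ι → R)} {c : ι → R} (hc : c ∈ C)
    (hmax : ∀ x ∈ C, hammingNorm x ≤ hammingNorm c) : C.spanRank ≤ hammingNorm c := by
  rw [← spanRank_top, ← spanRank_map_eq_of_injective _
    (injective_restrict_support_of_hammingNorm_le hc hmax)]
  refine (spanRank_le_card _).trans ?_
  simp [hammingNorm, Fintype.card_subtype]

end PrincipalIdealRing

theorem hamming_anticode_bound_general (R : Type*) [CommRing R] [Fintype R]
    [DecidableEq R]
    (hchain : ∀ I J : Ideal R, I ≤ J ∨ J ≤ I)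
    (n : ℕ) (C : Submodule R (Fin n → R)) (K : ℕ)
    (hKmin : ∀ T : Finset (Fin n → R),
      Submodule.span R (T : Set (Fin n → R)) = C → K ≤ T.card)
    (w : ℕ)
    (hw : IsGreatest {m : ℕ | ∃ c ∈ C, m = hammingNorm c} w) :
    K ≤ w := by
  have : IsBezout R := isBezout_of_ideal_total hchain
  obtain ⟨c, hcC, rfl⟩ := hw.1
  have hrank : C.spanRank ≤ hammingNorm c :=
    C.spanRank_le_hammingNorm hcC fun x hx => hw.2 ⟨x, hx, rfl⟩
  have hfg : C.FG := IsNoetherian.noetherian C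
  obtain ⟨T, hTcard, hTspan⟩ := hfg.exists_span_finset_card_eq_spanFinrank
  calc K ≤ T.card := hKmin T hTspan
    _ = C.spanFinrank := hTcard
    _ ≤ hammingNorm c := (hfg.spanRank_le_iff _).mp hrank

/-- over a finite (commutative, local, chain) ring R, a linear
code C ⊆ Rⁿ of rank K (minimal number of generators) has maximum Hamming
weight w ≥ K. -/
theorem hamming_anticode_bound (R : Type*) [CommRing R] [Fintype R]
    [DecidableEq R] [IsLocalRing R]
    (hchain : ∀ I J : Ideal R, I ≤ J ∨ J ≤ I)
    (n : ℕ) (C : Submodule R (Fin n → R)) (K : ℕ)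
    (hKgen : ∃ T : Finset (Fin n → R), T.card = K ∧
      Submodule.span R (T : Set (Fin n → R)) = C)
    (hKmin : ∀ T : Finset (Fin n → R),
      Submodule.span R (T : Set (Fin n → R)) = C → K ≤ T.card)
    (w : ℕ)
    (hw : IsGreatest {m : ℕ | ∃ c ∈ C, m = hammingNorm c} w) :
    K ≤ w :=
  hamming_anticode_bound_general R hchain n C K hKmin w hw
end

section
/- Let C ⊆ R^n be a linear code of rank K over a finite chain ring R with residue field of characteristic p. The maximum homogeneous weight of C is at least K·p/(p-1). -/
/-!
Let `W = {c ∈ C | γ c = 0}` be the socle of `C`. Multiplication by `γ` on `C` has kernel `W` and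
cokernel `C/𝔪C`, so `|W| = |C/𝔪C| = q^d`, where by Nakayama `d` is the minimal number of
generators of `C`; hence `K ≤ d`. The coordinates of socle vectors lie in the minimal ideal
`⟨γ^(s-1)⟩`, a simple module with `q` elements. Choosing coordinates greedily gives a set `S` on
which `W` projects onto `⟨γ^(s-1)⟩^S` with `q^d ≤ q^|S|`, so some `v ∈ W` equals `γ^(s-1)` on
`S`, and its weight is at least `|S| · p/(p-1) ≥ K · p/(p-1)`.
-/

open Classical in
/-- Normalized homogeneous weight on a chain ring with maximal ideal ⟨γ⟩ of
nilpotency index s and residue characteristic p. -/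
noncomputable def homWt (R : Type*) [CommRing R] (γ : R) (s p : ℕ) (x : R) : ℚ :=
  if x = 0 then 0
  else if x ∈ Ideal.span ({γ ^ (s - 1)} : Set R) then (p : ℚ) / (p - 1)
  else 1

open IsLocalRing

section Counting

variable {R M : Type*} [CommRing R] [AddCommGroup M] [Module R M]

theorem natCard_quotient_range_eq_natCard_ker [Finite M] (f : M →ₗ[R] M) :
    Nat.card (M ⧸ LinearMap.range f) = Nat.card (LinearMap.ker f) := by
  have hrange := (LinearMap.range f).card_eq_card_quotient_mul_card
  have hker := (LinearMap.ker f).card_eq_card_quotient_mul_card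
  rw [Nat.card_congr f.quotKerEquivRange.toEquiv, hrange, mul_comm] at hker
  exact Nat.eq_of_mul_eq_mul_right Nat.card_pos hker

theorem span_singleton_smul_top_eq_range_lsmul (r : R) :
    Ideal.span {r} • (⊤ : Submodule R M) = LinearMap.range (LinearMap.lsmul R M r) := by
  ext x
  simp [Submodule.ideal_span_singleton_smul, Submodule.mem_smul_pointwise_iff_exists]

theorem natCard_ker_lsmul [Finite M] (r : R) :
    Nat.card (LinearMap.ker (LinearMap.lsmul R M r)) =
      Nat.card (M ⧸ Ideal.span {r} • (⊤ : Submodule R M)) := by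
  rw [span_singleton_smul_top_eq_range_lsmul, natCard_quotient_range_eq_natCard_ker]

theorem le_spanFinrank_of_forall_le_card {N : Submodule R M} (hN : N.FG) {K : ℕ}
    (hK : ∀ T : Finset M, Submodule.span R (T : Set M) = N → K ≤ T.card) :
    K ≤ N.spanFinrank := by
  obtain ⟨T, hTcard, hTspan⟩ := hN.exists_span_finset_card_eq_spanFinrank
  exact hTcard ▸ hK T hTspan

end Counting

section LocalRing

variable {R M : Type*} [CommRing R] [IsLocalRing R] [AddCommGroup M] [Module R M]

theorem natCard_quotient_maximalIdeal_smul_top [Finite M] (N : Submodule R M) :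
    Nat.card (N ⧸ maximalIdeal R • (⊤ : Submodule R N)) =
      Nat.card (ResidueField R) ^ N.spanFinrank := by
  let := Ideal.Quotient.field (maximalIdeal R)
  rw [spanFinrank_eq_finrank_quotient N (Module.Finite.iff_fg.mp inferInstance)]
  exact Module.natCard_eq_pow_finrank (K := R ⧸ maximalIdeal R)

theorem torsionOf_eq_maximalIdeal {x : M} (hx : x ≠ 0)
    (hm : ∀ a ∈ maximalIdeal R, a • x = 0) :
    Ideal.torsionOf R M x = maximalIdeal R :=
  ((maximalIdeal.isMaximal R).eq_of_le ((Ideal.torsionOf_eq_top_iff (R := R) x).not.mpr hx)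
    fun a ha => (Ideal.mem_torsionOf_iff x a).mpr (hm a ha)).symm

theorem isAtom_span_singleton {x : M} (hx : x ≠ 0) (hm : ∀ a ∈ maximalIdeal R, a • x = 0) :
    IsAtom (R ∙ x) := by
  rw [← isSimpleModule_iff_isAtom, isSimpleModule_iff_quot_maximal]
  refine ⟨maximalIdeal R, maximalIdeal.isMaximal R, ⟨?_⟩⟩
  rw [← torsionOf_eq_maximalIdeal hx hm]
  exact (Ideal.quotTorsionOfEquivSpanSingleton R M x).symm

theorem natCard_span_singleton {x : M} (hx : x ≠ 0) (hm : ∀ a ∈ maximalIdeal R, a • x = 0) :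
    Nat.card (R ∙ x) = Nat.card (ResidueField R) := by
  rw [← Nat.card_congr (Ideal.quotTorsionOfEquivSpanSingleton R M x).toEquiv,
    torsionOf_eq_maximalIdeal hx hm]
  rfl

end LocalRing

section InformationSet

variable {R ι : Type*} [CommRing R] [DecidableEq ι]

theorem exists_finset_subset_forall_exists_mem_eq (A : Ideal R) (hA : IsAtom A)
    (U : Finset ι) (W : Submodule R (ι → R)) (hWA : ∀ v ∈ W, ∀ i, v i ∈ A)
    (hWU : ∀ v ∈ W, ∀ i ∉ U, v i = 0) :
    ∃ S ⊆ U, Nat.card W ≤ Nat.card A ^ S.card ∧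
      ∀ f : ι → R, (∀ i, f i ∈ A) → ∃ v ∈ W, ∀ i ∈ S, v i = f i := by
  induction U using Finset.induction generalizing W with
  | empty =>
    have hW : W = ⊥ := (Submodule.eq_bot_iff W).mpr fun v hv => funext fun i => hWU v hv i
      (Finset.notMem_empty i)
    refine ⟨∅, subset_rfl, ?_, fun f _ => ⟨0, W.zero_mem, by simp⟩⟩
    simp [hW]
  | insert i U hiU ih =>
    let ev : W →ₗ[R] R := (LinearMap.proj i).comp W.subtype
    let W' : Submodule R (ι → R) := (LinearMap.ker ev).map W.subtype
    have hW'W : W' ≤ W := Submodule.map_subtype_le _ _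
    have hW'i : ∀ v ∈ W', v i = 0 := by
      rintro _ ⟨u, hu, rfl⟩
      exact hu
    obtain ⟨S, hSU, hScard, hS⟩ := ih W' (fun v hv => hWA v (hW'W hv)) fun v hv j hj => by
      by_cases hji : j = i
      · exact hji ▸ hW'i v hv
      · exact hWU v (hW'W hv) j (by simp [hji, hj])
    have hev : LinearMap.range ev ≤ A := by
      rintro _ ⟨u, rfl⟩
      exact hWA u u.2 i
    -- `A` is minimal, so coordinate `i` either vanishes on `W` or takes every value in `A`
    rcases hev.lt_or_eq with hlt | heq
    · have hW' : W' = W := by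
        have hev0 : ev = 0 := LinearMap.range_eq_bot.mp (hA.2 _ hlt)
        exact le_antisymm hW'W fun v hv => ⟨⟨v, hv⟩, LinearMap.congr_fun hev0 _, rfl⟩
      exact ⟨S, hSU.trans (Finset.subset_insert _ _), hW' ▸ hScard, hW' ▸ hS⟩
    · refine ⟨insert i S, Finset.insert_subset_insert i hSU, ?_, ?_⟩
      · rw [Finset.card_insert_of_notMem fun hiS => hiU (hSU hiS), pow_succ,
          (LinearMap.ker ev).card_eq_card_quotient_mul_card,
          Nat.card_congr ev.quotKerEquivRange.toEquiv, heq,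
          Nat.card_congr (Submodule.equivMapOfInjective _ W.injective_subtype _).toEquiv]
        exact Nat.mul_le_mul_right _ hScard
      · intro f hf
        obtain ⟨u, hu⟩ : f i ∈ LinearMap.range ev := heq ▸ hf i
        obtain ⟨v, hvW', hv⟩ := hS (f - u) fun j => A.sub_mem (hf j) (hWA u u.2 j)
        refine ⟨u + v, W.add_mem u.2 (hW'W hvW'), ?_⟩
        intro j hj
        rcases Finset.mem_insert.mp hj with rfl | hjS
        · simp [hW'i v hvW', ← hu, ev]
        · simp [hv j hjS]

end InformationSet

section ChainRing

variable {R : Type*} [CommRing R] [IsLocalRing R] {γ : R}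

theorem natCard_map_subtype_ker_lsmul {M : Type*} [AddCommGroup M] [Module R M] [Finite M]
    (hmax : maximalIdeal R = Ideal.span {γ}) (N : Submodule R M) :
    Nat.card ((LinearMap.ker (LinearMap.lsmul R N γ)).map N.subtype) =
      Nat.card (ResidueField R) ^ N.spanFinrank := by
  rw [← Nat.card_congr (Submodule.equivMapOfInjective _ N.injective_subtype _).toEquiv,
    natCard_ker_lsmul, ← hmax, natCard_quotient_maximalIdeal_smul_top]

variable {s : ℕ}

theorem smul_pow_pred_eq_zero (hmax : maximalIdeal R = Ideal.span {γ}) (hs : 1 ≤ s)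
    (hnil : γ ^ s = 0) : ∀ a ∈ maximalIdeal R, a • γ ^ (s - 1) = 0 := by
  intro a ha
  obtain ⟨b, rfl⟩ := Ideal.mem_span_singleton'.mp (hmax ▸ ha)
  rw [smul_eq_mul, mul_assoc, ← pow_succ', Nat.sub_add_cancel hs, hnil, mul_zero]

theorem mem_span_pow_pred_of_mul_eq_zero [Finite R] (hmax : maximalIdeal R = Ideal.span {γ})
    (hs : 1 ≤ s) (hnil : γ ^ s = 0) (hnil' : γ ^ (s - 1) ≠ 0) {x : R} (hx : γ * x = 0) :
    x ∈ Ideal.span {γ ^ (s - 1)} := by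
  have hle : Ideal.span {γ ^ (s - 1)} ≤ LinearMap.ker (LinearMap.lsmul R R γ) := by
    rw [Ideal.span_le, Set.singleton_subset_iff]
    exact smul_pow_pred_eq_zero hmax hs hnil γ (hmax ▸ Ideal.mem_span_singleton_self γ)
  -- both have `q` elements, the kernel because `|ker γ| = |R ⧸ γR|`
  have hcard : Nat.card (LinearMap.ker (LinearMap.lsmul R R γ)) ≤
      Nat.card (Ideal.span {γ ^ (s - 1)}) := by
    rw [natCard_ker_lsmul, ← hmax, smul_eq_mul, Ideal.mul_top, ← Ideal.submodule_span_eq,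
      natCard_span_singleton hnil' (smul_pow_pred_eq_zero hmax hs hnil)]
    rfl
  have heq := AddSubgroup.eq_of_le_of_card_ge (H := (Ideal.span {γ ^ (s - 1)}).toAddSubgroup)
    (K := (LinearMap.ker (LinearMap.lsmul R R γ)).toAddSubgroup) hle hcard
  exact (SetLike.ext_iff.mp heq x).mpr hx

end ChainRing

theorem natCast_div_natCast_sub_one_nonneg (p : ℕ) : 0 ≤ (p : ℚ) / (p - 1) := by
  rcases p with _ | p
  · simp
  · push_cast
    rw [add_sub_cancel_right]
    positivity

theorem homWt_nonneg {R : Type*} [CommRing R] (γ : R) (s p : ℕ) (x : R) :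
    0 ≤ homWt R γ s p x := by
  unfold homWt
  split_ifs
  exacts [le_rfl, natCast_div_natCast_sub_one_nonneg p, zero_le_one]

theorem homWt_pow_pred {R : Type*} [CommRing R] {γ : R} {s : ℕ} (p : ℕ)
    (hnil' : γ ^ (s - 1) ≠ 0) : homWt R γ s p (γ ^ (s - 1)) = p / (p - 1) := by
  simp [homWt, hnil']

theorem card_mul_le_sum_homWt {R : Type*} [CommRing R] {γ : R} {s n : ℕ} (p : ℕ)
    (hnil' : γ ^ (s - 1) ≠ 0) (S : Finset (Fin n)) {v : Fin n → R}
    (hvS : ∀ j ∈ S, v j = γ ^ (s - 1)) :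
    S.card * ((p : ℚ) / (p - 1)) ≤ ∑ j, homWt R γ s p (v j) :=
  calc S.card * ((p : ℚ) / (p - 1)) = ∑ j ∈ S, homWt R γ s p (v j) := by
        rw [Finset.sum_congr rfl fun j hj => (hvS j hj).symm ▸ homWt_pow_pred p hnil',
          Finset.sum_const, nsmul_eq_mul]
    _ ≤ ∑ j, homWt R γ s p (v j) :=
      Finset.sum_le_sum_of_subset_of_nonneg S.subset_univ fun j _ _ => homWt_nonneg γ s p _

theorem homogeneous_anticode_bound_general (R : Type*) [CommRing R] [Fintype R]
    [IsLocalRing R] (γ : R) (s : ℕ) (hs : 1 ≤ s)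
    (hmax : IsLocalRing.maximalIdeal R = Ideal.span {γ})
    (hnil : γ ^ s = 0) (hnil' : γ ^ (s - 1) ≠ 0)
    (p : ℕ)
    (n : ℕ) (C : Submodule R (Fin n → R)) (K : ℕ)
    (hKmin : ∀ T : Finset (Fin n → R),
      Submodule.span R (T : Set (Fin n → R)) = C → K ≤ T.card)
    (w : ℚ)
    (hw : IsGreatest {m : ℚ | ∃ c ∈ C, m = ∑ i, homWt R γ s p (c i)} w) :
    (K : ℚ) * p / (p - 1) ≤ w := by
  set A : Ideal R := Ideal.span {γ ^ (s - 1)}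
  set W := (LinearMap.ker (LinearMap.lsmul R C γ)).map C.subtype
  have hWA : ∀ v ∈ W, ∀ i, v i ∈ A := by
    rintro _ ⟨c, hc, rfl⟩ i
    exact mem_span_pow_pred_of_mul_eq_zero hmax hs hnil hnil' <| by
      simpa using congrArg (fun c : C => (c : Fin n → R) i) hc
  obtain ⟨S, -, hWS, hS⟩ := exists_finset_subset_forall_exists_mem_eq A
    (isAtom_span_singleton hnil' (smul_pow_pred_eq_zero hmax hs hnil)) Finset.univ W hWA
    fun _ _ i hi => absurd (Finset.mem_univ i) hi
  obtain ⟨v, hvW, hvS⟩ := hS (fun _ => γ ^ (s - 1)) fun _ => Ideal.mem_span_singleton_self _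
  have hKS : K ≤ S.card := by
    have : Finite (ResidueField R) := .of_surjective _ residue_surjective
    have hAcard : Nat.card A = Nat.card (ResidueField R) :=
      natCard_span_singleton hnil' (smul_pow_pred_eq_zero hmax hs hnil)
    rw [natCard_map_subtype_ker_lsmul hmax, hAcard,
      Nat.pow_le_pow_iff_right Finite.one_lt_card] at hWS
    exact (le_spanFinrank_of_forall_le_card (Module.Finite.iff_fg.mp inferInstance) hKmin).trans hWS
  calc (K : ℚ) * p / (p - 1) = K * (p / (p - 1)) := by ring
    _ ≤ S.card * (p / (p - 1)) :=
      mul_le_mul_of_nonneg_right (by exact_mod_cast hKS) (natCast_div_natCast_sub_one_nonneg p)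
    _ ≤ ∑ j, homWt R γ s p (v j) := card_mul_le_sum_homWt p hnil' S hvS
    _ ≤ w := hw.2 ⟨v, Submodule.map_subtype_le _ _ hvW, rfl⟩

/-- a linear code C ⊆ Rⁿ of rank K over a finite chain ring R
(residue field of characteristic p) has maximum homogeneous weight at least
K·p/(p−1). -/
theorem homogeneous_anticode_bound (R : Type*) [CommRing R] [Fintype R]
    [IsLocalRing R] (γ : R) (s : ℕ) (hs : 1 ≤ s)
    (hmax : IsLocalRing.maximalIdeal R = Ideal.span {γ})
    (hnil : γ ^ s = 0) (hnil' : γ ^ (s - 1) ≠ 0)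
    (p r : ℕ) (hp : p.Prime)
    (hres : Nat.card (IsLocalRing.ResidueField R) = p ^ r)
    (n : ℕ) (C : Submodule R (Fin n → R)) (K : ℕ)
    (hKgen : ∃ T : Finset (Fin n → R), T.card = K ∧
      Submodule.span R (T : Set (Fin n → R)) = C)
    (hKmin : ∀ T : Finset (Fin n → R),
      Submodule.span R (T : Set (Fin n → R)) = C → K ≤ T.card)
    (w : ℚ)
    (hw : IsGreatest {m : ℚ | ∃ c ∈ C, m = ∑ i, homWt R γ s p (c i)} w) :
    (K : ℚ) * p / (p - 1) ≤ w :=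
  homogeneous_anticode_bound_general R γ s hs hmax hnil hnil' p n C K hKmin w hw
end
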